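/- Let 𝕌 be a subfield of ℝ, n ≥ 2, and let P = (p_ij) be an n×n positive stochastic matrix with entries in 𝕌. If for every column j one has max_{1≤i≤n} p_ij − min_{1≤i≤n} p_ij < 1/(n−1), then P is similar over 𝕌 to a positive doubly stochastic matrix Q and is strong shift equivalent over 𝕌₊ to Q through a chain consisting entirely of n×n matrices. -/

import Mathlib

open Matrix BigOperators

/-- Elementary strong shift equivalence between `n × n` real matrices, with all entries of the
connecting matrices lying in the set `S ⊆ ℝ`. -/
def ESSEn (S : Set ℝ) {n : ℕ} (A B : Matrix (Fin n) (Fin n) ℝ) : Prop :=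
  ∃ U V : Matrix (Fin n) (Fin n) ℝ,
    (∀ i j, U i j ∈ S) ∧ (∀ i j, V i j ∈ S) ∧ A = U * V ∧ B = V * U

/-- Strong shift equivalence through matrices of the same size `n`: a finite chain of
elementary strong shift equivalences, all between `n × n` matrices. -/
def SSEn (S : Set ℝ) {n : ℕ} (A B : Matrix (Fin n) (Fin n) ℝ) : Prop :=
  Relation.ReflTransGen (ESSEn S) A B

/-- `A` and `B` are similar via a conjugating matrix invertible over `U ⊆ ℝ`. -/
def SimilarOver (U : Set ℝ) {n : ℕ} (A B : Matrix (Fin n) (Fin n) ℝ) : Prop :=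
  ∃ M : Matrix (Fin n) (Fin n) ℝ, IsUnit M ∧ (∀ i j, M i j ∈ U) ∧
    (∀ i j, M⁻¹ i j ∈ U) ∧ B = M * A * M⁻¹

/-!
Put `w := (𝟙 - 𝟙ᵀP) / n` and `Q := P + 𝟙wᵀ`: `Q` is doubly stochastic, and the bound on the
column spreads is what makes it positive. Let `z` be the stationary vector of `P`
(`zP = z`, `∑ z = 1`; the sum of a left fixed vector cannot vanish because `P` is positive) and
`v := z - 𝟙/n`, so that `∑ v = 0` and `vP = v + w`. Then conjugation by `shear (δ • v) = I + δ𝟙vᵀ`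
moves `P + t𝟙wᵀ` to `P + (t + δ)𝟙wᵀ`; with `δ = 1` this is the similarity.

For the shift equivalence over `𝕌₊` split `v = v⁺ - v⁻`: `shear (δ • v)` is
`shear (δ • v⁺) * (shear (δ • v⁻))⁻¹`, and conjugating a stochastic matrix by `shear u` or its
inverse, `u ≥ 0`, is an elementary equivalence with nonnegative factors as soon as its entries
are at least `∑ u`. All matrices `P + t𝟙wᵀ`, `0 ≤ t ≤ 1`, have entries above a fixed `m > 0`, so
`N` steps of size `δ = 1/N` work for `N` large. Everything happens over an Archimedean ordered
field, here `𝕌`.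
-/

open Finset

section CommRing

variable {R ι : Type*} [CommRing R] [Fintype ι]

lemma replicateRow_mul_replicateRow (u w : ι → R) :
    replicateRow ι u * replicateRow ι w = (∑ i, u i) • replicateRow ι w := by
  ext i j
  simp [mul_apply, sum_mul]

lemma vecMul_replicateRow (u w : ι → R) : u ᵥ* replicateRow ι w = (∑ i, u i) • w := by
  ext j
  simp [vecMul, dotProduct, sum_mul]

lemma sum_row_eq_one_of_mulVec_one {A : Matrix ι ι R} (hA : A *ᵥ 1 = 1) (i : ι) :
    ∑ j, A i j = 1 := by
  simpa [mulVec, dotProduct] using congrFun hA i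

lemma mul_replicateRow_of_mulVec_one {A : Matrix ι ι R} (hA : A *ᵥ 1 = 1) (u : ι → R) :
    A * replicateRow ι u = replicateRow ι u := by
  ext i j
  simp [mul_apply, ← sum_mul, sum_row_eq_one_of_mulVec_one hA]

lemma sum_vecMul_of_mulVec_one {A : Matrix ι ι R} (hA : A *ᵥ 1 = 1) (u : ι → R) :
    ∑ j, (u ᵥ* A) j = ∑ i, u i := by
  simpa [dotProduct, hA] using (dotProduct_mulVec u A 1).symm

lemma add_replicateRow_mulVec_one {A : Matrix ι ι R} (hA : A *ᵥ 1 = 1) {x : ι → R}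
    (hx : ∑ i, x i = 0) : (A + replicateRow ι x) *ᵥ 1 = 1 := by
  rw [add_mulVec, hA, replicateRow_mulVec_eq_const]
  simp [dotProduct, hx]

lemma sum_eq_zero_of_vecMul_eq_add {P : Matrix ι ι R} (hP : P *ᵥ 1 = 1) {v w : ι → R}
    (hvP : v ᵥ* P = v + w) : ∑ i, w i = 0 := by
  have h := sum_vecMul_of_mulVec_one hP v
  rw [hvP] at h
  simpa [sum_add_distrib] using h

variable [DecidableEq ι]

lemma exists_ne_zero_vecMul_eq_self [IsDomain R] [Nonempty ι] {P : Matrix ι ι R}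
    (hP : P *ᵥ 1 = 1) : ∃ y ≠ 0, y ᵥ* P = y := by
  have hdet : (P - 1).det = 0 :=
    exists_mulVec_eq_zero_iff.mp ⟨1, one_ne_zero, by rw [sub_mulVec, hP, one_mulVec, sub_self]⟩
  obtain ⟨y, hy, hyP⟩ := exists_vecMul_eq_zero_iff.mpr hdet
  exact ⟨y, hy, by rwa [vecMul_sub, vecMul_one, sub_eq_zero] at hyP⟩

def shear (u : ι → R) : Matrix ι ι R := 1 + replicateRow ι u

lemma shear_mul_shear (a b : ι → R) :
    shear a * shear b = shear (a + (1 + ∑ i, a i) • b) := by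
  simp only [shear, add_mul, mul_add, one_mul, mul_one, replicateRow_mul_replicateRow,
    replicateRow_add, replicateRow_smul, add_smul, one_smul]
  abel

lemma shear_mul (a : ι → R) (A : Matrix ι ι R) :
    shear a * A = A + replicateRow ι (a ᵥ* A) := by
  simp [shear, add_mul, replicateRow_vecMul]

lemma mul_shear {A : Matrix ι ι R} (hA : A *ᵥ 1 = 1) (a : ι → R) :
    A * shear a = A + replicateRow ι a := by
  simp [shear, mul_add, mul_replicateRow_of_mulVec_one hA]

end CommRing

section Field

variable {K ι : Type*} [Field K] [Fintype ι] [DecidableEq ι] {A : Matrix ι ι K} {a : ι → K}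

lemma shear_mul_shear_neg_inv_smul (h : 1 + ∑ i, a i ≠ 0) :
    shear a * shear (-(1 + ∑ i, a i)⁻¹ • a) = 1 := by
  rw [shear_mul_shear, smul_smul, mul_neg, mul_inv_cancel₀ h, neg_one_smul, add_neg_cancel]
  simp [shear]

lemma inv_shear (h : 1 + ∑ i, a i ≠ 0) : (shear a)⁻¹ = shear (-(1 + ∑ i, a i)⁻¹ • a) :=
  inv_eq_right_inv (shear_mul_shear_neg_inv_smul h)

lemma isUnit_det_shear (h : 1 + ∑ i, a i ≠ 0) : IsUnit (shear a).det :=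
  isUnit_det_of_right_inverse (shear_mul_shear_neg_inv_smul h)

lemma shear_mul_mul_inv (hA : A *ᵥ 1 = 1) (h : 1 + ∑ i, a i ≠ 0) :
    shear a * A * (shear a)⁻¹ = A + replicateRow ι (a ᵥ* A - a) := by
  have hx : ∑ j, (a ᵥ* A - a) j = 0 := by simp [sum_sub_distrib, sum_vecMul_of_mulVec_one hA]
  have hcomm : shear a * A = (A + replicateRow ι (a ᵥ* A - a)) * shear a := by
    rw [shear_mul, mul_shear (add_replicateRow_mulVec_one hA hx), add_assoc, ← replicateRow_add,
      sub_add_cancel]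
  rw [hcomm]
  exact mul_nonsing_inv_cancel_right _ _ (isUnit_det_shear h)

lemma inv_shear_mul_mul (hA : A *ᵥ 1 = 1) (h : 1 + ∑ i, a i ≠ 0) :
    (shear a)⁻¹ * A * shear a = A + replicateRow ι ((1 + ∑ i, a i)⁻¹ • (a - a ᵥ* A)) := by
  have hcomm :
      A * shear a = shear a * (A + replicateRow ι ((1 + ∑ i, a i)⁻¹ • (a - a ᵥ* A))) := by
    rw [mul_shear hA, shear_mul, vecMul_add, vecMul_replicateRow, add_assoc, ← replicateRow_add]
    congr 2
    ext j
    simp only [Pi.add_apply, Pi.smul_apply, Pi.sub_apply, smul_eq_mul]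
    field_simp
    ring
  rw [Matrix.mul_assoc, hcomm]
  exact nonsing_inv_mul_cancel_left _ _ (isUnit_det_shear h)

lemma shear_sub_eq_mul_inv {a b : ι → K} (hab : ∑ i, a i = ∑ i, b i)
    (h : 1 + ∑ i, b i ≠ 0) : shear (a - b) = shear a * (shear b)⁻¹ := by
  rw [inv_shear h, shear_mul_shear, smul_smul, hab, mul_neg, mul_inv_cancel₀ h, neg_one_smul,
    sub_eq_add_neg]

lemma shear_smul_mul_mul_inv {P : Matrix ι ι K} (hP : P *ᵥ 1 = 1) {v w : ι → K}
    (hv : ∑ i, v i = 0) (hvP : v ᵥ* P = v + w) (δ t : K) :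
    shear (δ • v) * (P + t • replicateRow ι w) * (shear (δ • v))⁻¹ =
      P + (t + δ) • replicateRow ι w := by
  have hw := sum_eq_zero_of_vecMul_eq_add hP hvP
  rw [← replicateRow_smul,
    shear_mul_mul_inv (add_replicateRow_mulVec_one hP (by simp [← mul_sum, hw]))
      (by simp [← mul_sum, hv]),
    vecMul_add, smul_vecMul, vecMul_replicateRow, hvP, add_assoc, ← replicateRow_add,
    ← replicateRow_smul]
  congr 2
  ext j
  simp only [Pi.add_apply, Pi.smul_apply, Pi.sub_apply, smul_eq_mul, ← mul_sum, hv]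
  ring

end Field

def NonnegESSE {R ι : Type*} [Semiring R] [LE R] [Fintype ι] (A B : Matrix ι ι R) : Prop :=
  ∃ U V : Matrix ι ι R, (∀ i j, 0 ≤ U i j) ∧ (∀ i j, 0 ≤ V i j) ∧ A = U * V ∧ B = V * U

abbrev NonnegSSE {R ι : Type*} [Semiring R] [LE R] [Fintype ι] :
    Matrix ι ι R → Matrix ι ι R → Prop :=
  Relation.ReflTransGen NonnegESSE

section NonnegESSE

variable {R ι : Type*} [CommRing R] [LE R] [Fintype ι] [DecidableEq ι] {A M : Matrix ι ι R}

lemma nonnegESSE_mul_mul_inv (hM : IsUnit M.det) (hM0 : ∀ i j, 0 ≤ M i j)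
    (hAM : ∀ i j, 0 ≤ (A * M⁻¹) i j) : NonnegESSE A (M * A * M⁻¹) :=
  ⟨A * M⁻¹, M, hAM, hM0, (nonsing_inv_mul_cancel_right _ _ hM).symm, Matrix.mul_assoc _ _ _⟩

lemma nonnegESSE_inv_mul_mul (hM : IsUnit M.det) (hM0 : ∀ i j, 0 ≤ M i j)
    (hMA : ∀ i j, 0 ≤ (M⁻¹ * A) i j) : NonnegESSE A (M⁻¹ * A * M) :=
  ⟨M, M⁻¹ * A, hM0, hMA, (mul_nonsing_inv_cancel_left _ _ hM).symm, rfl⟩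

end NonnegESSE

section Ordered

variable {K : Type*} [Field K] [LinearOrder K] [IsStrictOrderedRing K]

lemma abs_sum_lt_sum_abs {ι : Type*} {s : Finset ι} {f : ι → K} {a b : ι} (ha : a ∈ s)
    (hb : b ∈ s) (hfa : 0 < f a) (hfb : f b < 0) : |∑ i ∈ s, f i| < ∑ i ∈ s, |f i| := by
  rw [abs_lt, ← sum_neg_distrib]
  constructor
  · exact sum_lt_sum (fun i _ => neg_abs_le (f i)) ⟨a, ha, by rw [abs_of_pos hfa]; linarith⟩
  · exact sum_lt_sum (fun i _ => le_abs_self (f i)) ⟨b, hb, by rw [abs_of_neg hfb]; linarith⟩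

lemma exists_pos_forall_le_of_pos {α : Type*} [Finite α] {f : α → K} (hf : ∀ a, 0 < f a) :
    ∃ m, 0 < m ∧ ∀ a, m ≤ f a := by
  cases isEmpty_or_nonempty α
  · exact ⟨1, one_pos, fun a => isEmptyElim a⟩
  · obtain ⟨a, ha⟩ := Finite.exists_min f
    exact ⟨f a, hf a, ha⟩

lemma inv_one_add_mul_le {s x : K} (hs : 0 ≤ s) (hx : 0 ≤ x) : (1 + s)⁻¹ * x ≤ x :=
  mul_le_of_le_one_left hx (inv_le_one_of_one_le₀ (le_add_of_nonneg_right hs))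

lemma shear_nonneg {ι : Type*} [DecidableEq ι] {u : ι → K} (hu : ∀ i, 0 ≤ u i) (i j : ι) :
    0 ≤ shear u i j := by
  simp only [shear, Matrix.add_apply, one_apply, replicateRow_apply]
  split_ifs <;> linarith [hu j]

lemma le_add_smul_replicateRow_apply {ι : Type*} {P : Matrix ι ι K} {w : ι → K} {m t : K}
    (hP : ∀ i j, m ≤ P i j) (hQ : ∀ i j, m ≤ P i j + w j) (ht0 : 0 ≤ t) (ht1 : t ≤ 1)
    (i j : ι) : m ≤ (P + t • replicateRow ι w) i j := by
  simp only [Matrix.add_apply, Matrix.smul_apply, replicateRow_apply, smul_eq_mul]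
  nlinarith [mul_nonneg (sub_nonneg.2 ht1) (sub_nonneg.2 (hP i j)),
    mul_nonneg ht0 (sub_nonneg.2 (hQ i j))]

variable {ι : Type*} [Fintype ι]

lemma sum_negPart_eq_sum_posPart {v : ι → K} (hv : ∑ i, v i = 0) :
    ∑ i, v⁻ i = ∑ i, v⁺ i := by
  have h := congrArg (fun x : ι → K => ∑ i, x i) (posPart_sub_negPart v)
  simp only [Pi.sub_apply, sum_sub_distrib, hv] at h
  linarith

lemma sum_ne_zero_of_vecMul_eq_self {P : Matrix ι ι K} (hpos : ∀ i j, 0 < P i j)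
    (hrow : P *ᵥ 1 = 1) {y : ι → K} (hy : y ≠ 0) (hyP : y ᵥ* P = y) : ∑ i, y i ≠ 0 := by
  intro hsum
  have hy' : ∃ i ∈ univ, y i ≠ 0 := by simpa [funext_iff] using hy
  obtain ⟨a, -, ha⟩ := exists_pos_of_sum_zero_of_exists_nonzero y hsum hy'
  obtain ⟨b, -, hb⟩ := exists_pos_of_sum_zero_of_exists_nonzero (s := univ) (-y)
    (by simp [hsum]) (let ⟨i, hi, h⟩ := hy'; ⟨i, hi, by simpa using h⟩)
  have hlt : ∀ j, |y j| < ∑ i, |y i| * P i j := fun j =>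
    calc |y j| = |∑ i, y i * P i j| := by rw [← congrFun hyP j]; rfl
      _ < ∑ i, |y i * P i j| :=
        abs_sum_lt_sum_abs (mem_univ a) (mem_univ b) (mul_pos ha (hpos a j))
          (mul_neg_of_neg_of_pos (neg_pos.1 hb) (hpos b j))
      _ = ∑ i, |y i| * P i j := by simp_rw [abs_mul, abs_of_pos (hpos _ j)]
  have h := sum_lt_sum_of_nonempty ⟨a, mem_univ a⟩ fun j (_ : j ∈ univ) => hlt j
  simp only [sum_comm (γ := ι), ← mul_sum, sum_row_eq_one_of_mulVec_one hrow, mul_one] at h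
  exact lt_irrefl _ h

variable [DecidableEq ι] {A : Matrix ι ι K} {u : ι → K}

lemma exists_vecMul_eq_self_sum_eq_one [Nonempty ι] {P : Matrix ι ι K}
    (hpos : ∀ i j, 0 < P i j) (hrow : P *ᵥ 1 = 1) :
    ∃ z : ι → K, z ᵥ* P = z ∧ ∑ i, z i = 1 := by
  obtain ⟨y, hy, hyP⟩ := exists_ne_zero_vecMul_eq_self hrow
  have hsum := sum_ne_zero_of_vecMul_eq_self hpos hrow hy hyP
  refine ⟨(∑ i, y i)⁻¹ • y, by rw [smul_vecMul, hyP], ?_⟩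
  simp [← mul_sum, inv_mul_cancel₀ hsum]

lemma sum_column_sub_lt_one {P : Matrix ι ι K}
    (hcol : ∀ j i i', P i j - P i' j < 1 / ((Fintype.card ι : K) - 1)) (i j : ι) :
    ∑ k, (P k j - P i j) < 1 := by
  have hn : (0 : K) < Fintype.card ι - 1 := one_div_pos.1 (by simpa using hcol j i i)
  have hcard : 1 < Fintype.card ι := by exact_mod_cast sub_pos.1 hn
  obtain ⟨k, hk⟩ := Fintype.exists_ne_of_one_lt_card hcard i
  rw [← sum_erase_add _ _ (mem_univ i), sub_self, add_zero]
  calc ∑ k ∈ univ.erase i, (P k j - P i j)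
      < ∑ k ∈ univ.erase i, 1 / ((Fintype.card ι : K) - 1) :=
        sum_lt_sum_of_nonempty ⟨k, mem_erase.2 ⟨hk, mem_univ k⟩⟩ fun k _ => hcol j k i
    _ = 1 := by
      rw [sum_const, card_erase_of_mem (mem_univ i), card_univ, nsmul_eq_mul,
        Nat.cast_sub hcard.le, Nat.cast_one, mul_one_div_cancel hn.ne']

lemma vecMul_apply_le_sum (hA : A ∈ rowStochastic K ι) (hu : ∀ i, 0 ≤ u i) (j : ι) :
    (u ᵥ* A) j ≤ ∑ i, u i :=
  sum_le_sum fun i _ => mul_le_of_le_one_right (hu i) (le_one_of_mem_rowStochastic hA)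

lemma sub_sum_le_mul_inv_shear_apply (hA : A *ᵥ 1 = 1) (hu : ∀ i, 0 ≤ u i) (i j : ι) :
    A i j - ∑ k, u k ≤ (A * (shear u)⁻¹) i j := by
  have hσ : 0 ≤ ∑ k, u k := sum_nonneg fun k _ => hu k
  rw [inv_shear (by positivity), mul_shear hA]
  simp only [Matrix.add_apply, replicateRow_apply, Pi.smul_apply, smul_eq_mul, neg_mul]
  linarith [inv_one_add_mul_le hσ (hu j), single_le_sum (fun k _ => hu k) (mem_univ j)]

lemma sub_sum_le_inv_shear_mul_apply (hA : A ∈ rowStochastic K ι) (hu : ∀ i, 0 ≤ u i)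
    (i j : ι) : A i j - ∑ k, u k ≤ ((shear u)⁻¹ * A) i j := by
  have hσ : 0 ≤ ∑ k, u k := sum_nonneg fun k _ => hu k
  rw [inv_shear (by positivity), shear_mul, smul_vecMul]
  simp only [Matrix.add_apply, replicateRow_apply, Pi.smul_apply, smul_eq_mul, neg_mul]
  linarith [inv_one_add_mul_le hσ (nonneg_vecMul_of_mem_rowStochastic hA hu j),
    vecMul_apply_le_sum hA hu j]

lemma sub_sum_le_inv_shear_mul_mul_apply (hA : A ∈ rowStochastic K ι) (hu : ∀ i, 0 ≤ u i)
    (i j : ι) : A i j - ∑ k, u k ≤ ((shear u)⁻¹ * A * shear u) i j := by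
  have hσ : 0 ≤ ∑ k, u k := sum_nonneg fun k _ => hu k
  have hc : 0 ≤ (1 + ∑ k, u k)⁻¹ := by positivity
  rw [inv_shear_mul_mul hA.2 (by positivity)]
  simp only [Matrix.add_apply, replicateRow_apply, Pi.smul_apply, Pi.sub_apply, smul_eq_mul,
    mul_sub]
  linarith [inv_one_add_mul_le hσ (nonneg_vecMul_of_mem_rowStochastic hA hu j),
    vecMul_apply_le_sum hA hu j, mul_nonneg hc (hu j)]

lemma nonnegSSE_shear_sub_mul_mul_inv (hA : A ∈ rowStochastic K ι) {a b : ι → K}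
    (ha : ∀ i, 0 ≤ a i) (hb : ∀ i, 0 ≤ b i) (hab : ∑ i, a i = ∑ i, b i)
    (hAab : ∀ i j, ∑ k, a k + ∑ k, b k ≤ A i j) :
    NonnegSSE A (shear (a - b) * A * (shear (a - b))⁻¹) := by
  have ha0 : 0 ≤ ∑ k, a k := sum_nonneg fun k _ => ha k
  have hb0 : 0 ≤ ∑ k, b k := sum_nonneg fun k _ => hb k
  have ha1 : 1 + ∑ i, a i ≠ 0 := by positivity
  have hb1 : 1 + ∑ i, b i ≠ 0 := by positivity
  set B := (shear b)⁻¹ * A * shear b with hB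
  have hBa : ∀ i j, ∑ k, a k ≤ B i j := fun i j => by
    linarith [sub_sum_le_inv_shear_mul_mul_apply hA hb i j, hAab i j]
  have hBrow : B *ᵥ 1 = 1 := by
    rw [hB, inv_shear_mul_mul hA.2 hb1]
    refine add_replicateRow_mulVec_one hA.2 ?_
    simp [← mul_sum, sum_sub_distrib, sum_vecMul_of_mulVec_one hA.2]
  have hAB : NonnegESSE A B := nonnegESSE_inv_mul_mul (isUnit_det_shear hb1) (shear_nonneg hb)
    fun i j => by linarith [sub_sum_le_inv_shear_mul_apply hA hb i j, hAab i j]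
  have hBC : NonnegESSE B (shear a * B * (shear a)⁻¹) :=
    nonnegESSE_mul_mul_inv (isUnit_det_shear ha1) (shear_nonneg ha)
      fun i j => by linarith [sub_sum_le_mul_inv_shear_apply hBrow ha i j, hBa i j]
  have hconj : shear a * B * (shear a)⁻¹ = shear (a - b) * A * (shear (a - b))⁻¹ := by
    rw [shear_sub_eq_mul_inv hab hb1, Matrix.mul_inv_rev,
      nonsing_inv_nonsing_inv _ (isUnit_det_shear hb1)]
    simp only [hB, Matrix.mul_assoc]
  exact (Relation.ReflTransGen.single hAB).tail (hconj ▸ hBC)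

lemma nonnegSSE_add_smul_replicateRow_step {P : Matrix ι ι K} {v w : ι → K}
    (hrow : P *ᵥ 1 = 1) (hv : ∑ i, v i = 0) (hvP : v ᵥ* P = v + w) {t δ : K} (hδ : 0 ≤ δ)
    (hA : P + t • replicateRow ι w ∈ rowStochastic K ι)
    (hAv : ∀ i j, 2 * (δ * ∑ k, v⁺ k) ≤ (P + t • replicateRow ι w) i j) :
    NonnegSSE (P + t • replicateRow ι w) (P + (t + δ) • replicateRow ι w) := by
  have hσ := sum_negPart_eq_sum_posPart hv
  have hsplit : δ • v = δ • v⁺ - δ • v⁻ := by rw [← smul_sub, posPart_sub_negPart]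
  rw [← shear_smul_mul_mul_inv hrow hv hvP, hsplit]
  refine nonnegSSE_shear_sub_mul_mul_inv hA (fun i => mul_nonneg hδ (posPart_nonneg (v i)))
    (fun i => mul_nonneg hδ (negPart_nonneg (v i)))
    (by simp only [Pi.smul_apply, smul_eq_mul, ← mul_sum, hσ]) fun i j => ?_
  simp only [Pi.smul_apply, smul_eq_mul, ← mul_sum, hσ]
  linarith [hAv i j]

theorem nonnegSSE_add_replicateRow [Archimedean K] {P : Matrix ι ι K} {v w : ι → K}
    (hP : ∀ i j, 0 < P i j) (hrow : P *ᵥ 1 = 1) (hQ : ∀ i j, 0 < P i j + w j)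
    (hv : ∑ i, v i = 0) (hvP : v ᵥ* P = v + w) :
    NonnegSSE P (P + replicateRow ι w) := by
  obtain ⟨m, hm, hmPQ⟩ := exists_pos_forall_le_of_pos
    (f := fun p : ι × ι => min (P p.1 p.2) (P p.1 p.2 + w p.2)) fun p => lt_min (hP _ _) (hQ _ _)
  have hw := sum_eq_zero_of_vecMul_eq_add hrow hvP
  have hσ : 0 ≤ ∑ i, v⁺ i := sum_nonneg fun i _ => posPart_nonneg _
  obtain ⟨N, hN⟩ := exists_nat_gt ((2 * ∑ i, v⁺ i) / m)
  have hN0 : (0 : K) < N := lt_of_le_of_lt (by positivity) hN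
  have hδ0 : 0 ≤ (N : K)⁻¹ := inv_nonneg.2 hN0.le
  have hδ : 2 * ((N : K)⁻¹ * ∑ i, v⁺ i) ≤ m := by
    rw [div_lt_iff₀ hm] at hN
    rw [← mul_assoc, mul_comm 2, mul_assoc, inv_mul_le_iff₀ hN0]
    linarith
  have hpath : ∀ t : K, 0 ≤ t → t ≤ 1 → P + t • replicateRow ι w ∈ rowStochastic K ι ∧
      ∀ i j, m ≤ (P + t • replicateRow ι w) i j := fun t ht0 ht1 => by
    have hm' := le_add_smul_replicateRow_apply (fun i j => (le_min_iff.1 (hmPQ (i, j))).1)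
      (fun i j => (le_min_iff.1 (hmPQ (i, j))).2) ht0 ht1
    refine ⟨⟨fun i j => hm.le.trans (hm' i j), ?_⟩, hm'⟩
    rw [← replicateRow_smul]
    exact add_replicateRow_mulVec_one hrow (by simp [← mul_sum, hw])
  have hchain : ∀ k ≤ N, NonnegSSE P (P + (k * (N : K)⁻¹) • replicateRow ι w) := by
    intro k
    induction k with
    | zero => intro; simpa using Relation.ReflTransGen.refl
    | succ k ih =>
      intro hk
      have hk1 : ((k : K) + 1) * (N : K)⁻¹ ≤ 1 := by
        rw [← div_eq_mul_inv, div_le_one hN0]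
        exact_mod_cast hk
      have ht0 : 0 ≤ (k : K) * (N : K)⁻¹ := by positivity
      obtain ⟨hA, hmA⟩ := hpath _ ht0 (by linarith)
      push_cast
      rw [add_one_mul]
      exact (ih (by omega)).trans
        (nonnegSSE_add_smul_replicateRow_step hrow hv hvP hδ0 hA fun i j => hδ.trans (hmA i j))
  simpa [mul_inv_cancel₀ hN0.ne'] using hchain N le_rfl

theorem exists_doublyStochastic_similar_nonnegSSE [Archimedean K] [Nonempty ι]
    {P : Matrix ι ι K} (hpos : ∀ i j, 0 < P i j) (hrow : P *ᵥ 1 = 1)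
    (hcol : ∀ j i i', P i j - P i' j < 1 / ((Fintype.card ι : K) - 1)) :
    ∃ Q : Matrix ι ι K, (∀ i j, 0 < Q i j) ∧ Q ∈ doublyStochastic K ι ∧
      (∃ M : Matrix ι ι K, IsUnit M ∧ Q = M * P * M⁻¹) ∧ NonnegSSE P Q := by
  set n : K := (Fintype.card ι : K)
  have hn : 0 < n := Nat.cast_pos.2 Fintype.card_pos
  set w : ι → K := n⁻¹ • (1 - 1 ᵥ* P)
  obtain ⟨z, hzP, hz⟩ := exists_vecMul_eq_self_sum_eq_one hpos hrow
  set v : ι → K := z - n⁻¹ • 1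
  have hv : ∑ i, v i = 0 := by simp [v, sum_sub_distrib, hz, n, hn.ne']
  have hvP : v ᵥ* P = v + w := by
    simp only [v, w, sub_vecMul, smul_vecMul, hzP, smul_sub]
    abel
  have hw : ∑ i, w i = 0 := sum_eq_zero_of_vecMul_eq_add hrow hvP
  have hQpos : ∀ i j, 0 < P i j + w j := fun i j => by
    have h := sum_column_sub_lt_one hcol i j
    rw [sum_sub_distrib, sum_const, card_univ, nsmul_eq_mul] at h
    have hQ : P i j + w j = n⁻¹ * (1 - (∑ k, P k j - n * P i j)) := by
      simp only [w, Pi.smul_apply, Pi.sub_apply, Pi.one_apply, smul_eq_mul, vecMul, dotProduct,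
        one_mul]
      field_simp
      ring
    rw [hQ]
    exact mul_pos (inv_pos.2 hn) (by linarith)
  have hv1 : 1 + ∑ i, v i ≠ 0 := by simp [hv]
  refine ⟨P + replicateRow ι w, hQpos,
    ⟨fun i j => (hQpos i j).le, add_replicateRow_mulVec_one hrow hw, ?_⟩,
    ⟨shear v, (isUnit_iff_isUnit_det _).2 (isUnit_det_shear hv1), ?_⟩,
    nonnegSSE_add_replicateRow hpos hrow hQpos hv hvP⟩
  · rw [vecMul_add, vecMul_replicateRow]
    simp [w, smul_smul, n, hn.ne']
  · rw [shear_mul_mul_inv hrow hv1, hvP, add_sub_cancel_left]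

end Ordered

section Subfield

variable {𝕌 : Subfield ℝ} {n : ℕ}

lemma NonnegESSE.map_subtype {A B : Matrix (Fin n) (Fin n) 𝕌} (h : NonnegESSE A B) :
    ESSEn {x : ℝ | x ∈ 𝕌 ∧ 0 ≤ x} (A.map 𝕌.subtype) (B.map 𝕌.subtype) := by
  obtain ⟨U, V, hU, hV, rfl, rfl⟩ := h
  exact ⟨U.map 𝕌.subtype, V.map 𝕌.subtype, fun i j => ⟨(U i j).2, hU i j⟩,
    fun i j => ⟨(V i j).2, hV i j⟩, Matrix.map_mul, Matrix.map_mul⟩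

lemma NonnegSSE.map_subtype {A B : Matrix (Fin n) (Fin n) 𝕌} (h : NonnegSSE A B) :
    SSEn {x : ℝ | x ∈ 𝕌 ∧ 0 ≤ x} (A.map 𝕌.subtype) (B.map 𝕌.subtype) :=
  Relation.ReflTransGen.lift (Matrix.map · 𝕌.subtype) (fun _ _ => NonnegESSE.map_subtype) _ _ h

lemma similarOver_map_subtype {P M : Matrix (Fin n) (Fin n) 𝕌} (hM : IsUnit M) :
    SimilarOver 𝕌 (P.map 𝕌.subtype) ((M * P * M⁻¹).map 𝕌.subtype) := by
  have hinv : (M.map 𝕌.subtype)⁻¹ = M⁻¹.map 𝕌.subtype := by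
    refine inv_eq_right_inv ?_
    rw [← Matrix.map_mul, mul_nonsing_inv _ ((isUnit_iff_isUnit_det _).1 hM)]
    exact Matrix.map_one _ (map_zero _) (map_one _)
  refine ⟨M.map 𝕌.subtype, hM.map 𝕌.subtype.mapMatrix, fun i j => (M i j).2,
    fun i j => hinv ▸ (M⁻¹ i j).2, ?_⟩
  rw [hinv, Matrix.map_mul, Matrix.map_mul]

end Subfield

/-- Let `𝕌` be a subfield of `ℝ`, `n ≥ 2`, and `P` an `n × n` positive
stochastic matrix over `𝕌`. If for every column `j` the difference between the largest and the
smallest entry of the column is less than `1/(n-1)` (equivalently, `P i j - P i' j < 1/(n-1)`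
for all rows `i, i'`), then `P` is similar over `𝕌` to a positive doubly stochastic matrix `Q`
and strong shift equivalent over `𝕌₊` to `Q` through `n × n` matrices. -/
theorem stmt5 (𝕌 : Subfield ℝ) {n : ℕ} (hn : 2 ≤ n)
    (P : Matrix (Fin n) (Fin n) ℝ) (hUP : ∀ i j, P i j ∈ 𝕌)
    (hpos : ∀ i j, 0 < P i j) (hrow : ∀ i, ∑ j, P i j = 1)
    (hcol : ∀ j i i', P i j - P i' j < 1 / ((n : ℝ) - 1)) :
    ∃ Q : Matrix (Fin n) (Fin n) ℝ,
      (∀ i j, Q i j ∈ 𝕌) ∧ (∀ i j, 0 < Q i j) ∧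
      (∀ i, ∑ j, Q i j = 1) ∧ (∀ j, ∑ i, Q i j = 1) ∧
      SimilarOver (𝕌 : Set ℝ) P Q ∧
      SSEn {x : ℝ | x ∈ 𝕌 ∧ 0 ≤ x} P Q := by
  have : Nonempty (Fin n) := ⟨⟨0, by omega⟩⟩
  set P' : Matrix (Fin n) (Fin n) 𝕌 := of fun i j => ⟨P i j, hUP i j⟩
  have hP : P'.map 𝕌.subtype = P := rfl
  obtain ⟨Q', hQpos, hQ, ⟨M, hM, rfl⟩, hsse⟩ := exists_doublyStochastic_similar_nonnegSSE
    (P := P') hpos (funext fun i => Subtype.ext (by simpa [P', mulVec, dotProduct] using hrow i))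
    fun j i i' => by simpa [P', ← Subtype.coe_lt_coe] using hcol j i i'
  obtain ⟨-, hQrow, hQcol⟩ := mem_doublyStochastic_iff_sum.1 hQ
  refine ⟨(M * P' * M⁻¹).map 𝕌.subtype, fun i j => SetLike.coe_mem _, hQpos, fun i => ?_,
    fun j => ?_, hP ▸ similarOver_map_subtype hM, hP ▸ hsse.map_subtype⟩
  · simpa using congrArg Subtype.val (hQrow i)
  · simpa using congrArg Subtype.val (hQcol j)
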